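/- Let H be a separable complex Hilbert space, let T ∈ B(H) be an operator that is not semi-Fredholm and let 0 < ε < ‖T‖. Let T = PA be the polar decomposition of T (P a partial isometry, A positive, ker(P) = (range A)^⊥) and let ν be the spectral measure of A. Then the operator S = P ∫_{[ε,‖T‖]} t dν(t) satisfies: (i) ‖Sx‖ ≥ ε‖x‖ for all x ∈ ker(S)^⊥, so in particular S has closed range; (ii) dim(ker S) = dim((range S)^⊥) = ∞; (iii) ‖T − S‖ ≤ ε. -/

import Mathlib

/-!
On `range Q` the operator `A` is at least `ε`, so `‖A y‖ ≥ ε ‖y‖` there, while `P` is isometric on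
`range A`. Hence `‖S x‖ = ‖A (Q x)‖ ≥ ε ‖Q x‖`, so `ker S = ker Q` and `S` is bounded below by `ε`
on `(ker S)ᗮ = range Q`, which gives (i) and closed range. If `ker S` were finite dimensional,
`range T = range S + T (ker Q)` would be closed and `ker T = ker A ≤ ker Q` finite dimensional; if
`(range S)ᗮ` were finite dimensional, `range T ⊇ range S` would be closed with
`ker T† = (range T)ᗮ ≤ (range S)ᗮ`. Either way `T` would be semi-Fredholm. Finally
`T - S = P (A - A Q)` where `0 ≤ A - A Q = A (1 - Q) ≤ ε` in the Loewner order.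
-/

noncomputable section

/-- An operator is semi-Fredholm if it has closed range and its kernel or the kernel
of its adjoint is finite dimensional. -/
def IsSemiFredholm {E : Type*} [NormedAddCommGroup E] [InnerProductSpace ℂ E]
    [CompleteSpace E] (T : E →L[ℂ] E) : Prop :=
  IsClosed (Set.range T) ∧
    (FiniteDimensional ℂ (LinearMap.ker (T : E →ₗ[ℂ] E)) ∨
      FiniteDimensional ℂ (LinearMap.ker ((ContinuousLinearMap.adjoint T : E →L[ℂ] E) : E →ₗ[ℂ] E)))

/-- `P` is a partial isometry: it is isometric on the orthogonal complement of its
kernel. -/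
def IsPartialIsom {E : Type*} [NormedAddCommGroup E] [InnerProductSpace ℂ E]
    (P : E →L[ℂ] E) : Prop :=
  ∀ x ∈ (LinearMap.ker (P : E →ₗ[ℂ] E))ᗮ, ‖P x‖ = ‖x‖

/-- `Q` is the spectral projection `ν([ε, ∞))` of the positive operator `A`, where `ν`
is the projection-valued spectral measure of `A` (for `ε ≤ ‖A‖` this coincides with
`ν([ε, ‖A‖])` since the spectral measure is supported on `[0, ‖A‖]`): equivalently, `Q`
is the unique orthogonal projection commuting with `A` such that `A ≥ ε` on the range of
`Q` and `A < ε` strictly on the kernel of `Q`. -/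
def IsSpectralProjAbove {E : Type*} [NormedAddCommGroup E] [InnerProductSpace ℂ E]
    [CompleteSpace E] (A : E →L[ℂ] E) (ε : ℝ) (Q : E →L[ℂ] E) : Prop :=
  Q ∘L Q = Q ∧ ContinuousLinearMap.adjoint Q = Q ∧ A ∘L Q = Q ∘L A ∧
    (∀ x ∈ LinearMap.range (Q : E →ₗ[ℂ] E), ε * ‖x‖ ^ 2 ≤ (inner ℂ (A x) x : ℂ).re) ∧
    (∀ x ∈ LinearMap.ker (Q : E →ₗ[ℂ] E), x ≠ 0 → (inner ℂ (A x) x : ℂ).re < ε * ‖x‖ ^ 2)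

open ContinuousLinearMap Submodule
open scoped InnerProductSpace

section InnerProduct

variable {𝕜 E F : Type*} [RCLike 𝕜] [NormedAddCommGroup E] [InnerProductSpace 𝕜 E]
  [CompleteSpace E] [NormedAddCommGroup F] [InnerProductSpace 𝕜 F]

namespace ContinuousLinearMap

theorem range_eq_image_orthogonal_ker (S : E →L[𝕜] F) :
    Set.range S = S '' (S.kerᗮ : Set E) := by
  refine (Set.image_subset_range _ _).antisymm' ?_
  rintro _ ⟨y, rfl⟩
  have hker : S (S.ker.starProjection y) = 0 := S.ker.starProjection_apply_mem y
  exact ⟨y - S.ker.starProjection y, sub_starProjection_mem_orthogonal y, by simp [hker]⟩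

theorem isClosed_range_of_bound_on_orthogonal_ker (S : E →L[𝕜] F) {c : ℝ} (hc : 0 < c)
    (h : ∀ x ∈ S.kerᗮ, c * ‖x‖ ≤ ‖S x‖) : IsClosed (Set.range S) := by
  set g : S.kerᗮ →L[𝕜] F := S ∘L S.kerᗮ.subtypeL
  have hg : AntilipschitzWith (c⁻¹).toNNReal g := g.antilipschitz_of_bound fun x ↦ by
    rw [Real.coe_toNNReal _ (inv_nonneg.2 hc.le), le_inv_mul_iff₀ hc]
    exact h x x.2
  have hrange : Set.range g = S '' S.kerᗮ := by
    rw [← Subtype.range_coe (s := (S.kerᗮ : Set E)), ← Set.range_comp]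
    rfl
  rw [S.range_eq_image_orthogonal_ker, ← hrange]
  exact hg.isClosed_range g.uniformContinuous

end ContinuousLinearMap

theorem IsStarProjection.apply_eq_self_of_mem_orthogonal_ker {p : E →L[𝕜] E}
    (hp : IsStarProjection p) {x : E} (hx : x ∈ p.kerᗮ) : p x = x := by
  obtain ⟨_, hp⟩ := isStarProjection_iff_eq_starProjection_range.1 hp
  rw [hp, ker_starProjection, orthogonal_orthogonal] at hx
  rw [hp]
  exact starProjection_eq_self_iff.2 hx

theorem IsStarProjection.norm_sub_apply_le {p : E →L[𝕜] E} (hp : IsStarProjection p) (x : E) :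
    ‖x - p x‖ ≤ ‖x‖ :=
  calc ‖x - p x‖ = ‖(1 - p) x‖ := rfl
    _ ≤ ‖1 - p‖ * ‖x‖ := le_opNorm _ _
    _ ≤ ‖x‖ := mul_le_of_le_one_left (norm_nonneg x) hp.one_sub.norm_le

theorem Submodule.isClosed_of_le_of_finiteDimensional_orthogonal [CompleteSpace F]
    {V W : Submodule 𝕜 F} (hV : IsClosed (V : Set F)) (hVW : V ≤ W) [FiniteDimensional 𝕜 Vᗮ] :
    IsClosed (W : Set F) := by
  have : CompleteSpace V := hV.completeSpace_coe
  have : FiniteDimensional 𝕜 (F ⧸ V) :=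
    (V.quotientEquivOfIsCompl Vᗮ V.isCompl_orthogonal).symm.finiteDimensional
  exact isClosed_mono_of_finiteDimensional_quotient hV hVW

end InnerProduct

section FiniteCodim

variable {𝕜 E F : Type*} [NontriviallyNormedField 𝕜]
  [NormedAddCommGroup E] [NormedSpace 𝕜 E] [NormedAddCommGroup F] [NormedSpace 𝕜 F]

theorem IsIdempotentElem.apply_sub_apply_eq_zero {Q : E →L[𝕜] E} (hQ : IsIdempotentElem Q)
    (x : E) : Q (x - Q x) = 0 := by
  rw [map_sub, ← mul_apply_eq_comp, hQ.eq, sub_self]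

theorem ContinuousLinearMap.isClosed_range_of_isClosed_range_comp [CompleteSpace 𝕜]
    {T : E →L[𝕜] F} {Q : E →L[𝕜] E} (hQ : IsIdempotentElem Q) (hTQ : IsClosed (Set.range (T ∘L Q)))
    [FiniteDimensional 𝕜 Q.ker] : IsClosed (Set.range T) := by
  have hrange : T.range = (T ∘L Q).range ⊔ Q.ker.map (T : E →ₗ[𝕜] F) := by
    refine le_antisymm ?_ (sup_le (LinearMap.range_comp_le_range _ _) (LinearMap.map_le_range))
    rintro _ ⟨x, rfl⟩
    exact mem_sup.2 ⟨T (Q x), ⟨x, rfl⟩, T (x - Q x),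
      mem_map_of_mem (hQ.apply_sub_apply_eq_zero x), by simp⟩
  rw [← coe_coe, ← LinearMap.coe_range, hrange]
  rw [← coe_coe, ← LinearMap.coe_range] at hTQ
  exact isClosed_sup_finiteDimensional _ _ hTQ

end FiniteCodim

namespace IsSemiFredholm

variable {H : Type*} [NormedAddCommGroup H] [InnerProductSpace ℂ H] [CompleteSpace H]
  {T : H →L[ℂ] H}

theorem of_isClosed_range_comp {Q : H →L[ℂ] H} (hQ : IsIdempotentElem Q)
    (hTQ : IsClosed (Set.range (T ∘L Q))) (hker : T.ker ≤ Q.ker) [FiniteDimensional ℂ Q.ker] :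
    IsSemiFredholm T :=
  ⟨T.isClosed_range_of_isClosed_range_comp hQ hTQ, .inl (finiteDimensional_of_le hker)⟩

theorem of_range_le {S : H →L[ℂ] H} (hS : IsClosed (Set.range S)) (hST : S.range ≤ T.range)
    [FiniteDimensional ℂ S.rangeᗮ] : IsSemiFredholm T := by
  refine ⟨?_, .inr ?_⟩
  · rw [← coe_coe, ← LinearMap.coe_range] at hS ⊢
    exact isClosed_of_le_of_finiteDimensional_orthogonal hS hST
  · rw [← orthogonal_range]
    exact finiteDimensional_of_le (orthogonal_le hST)

end IsSemiFredholm

namespace IsPartialIsom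

variable {H : Type*} [NormedAddCommGroup H] [InnerProductSpace ℂ H] {P : H →L[ℂ] H}

theorem norm_apply_le [CompleteSpace H] (hP : IsPartialIsom P) (y : H) : ‖P y‖ ≤ ‖y‖ := by
  have hker : P (P.ker.starProjection y) = 0 := P.ker.starProjection_apply_mem y
  have hPy : P (P.kerᗮ.starProjection y) = P y := by
    rw [starProjection_orthogonal_val, map_sub, hker, sub_zero]
  rw [← hPy, hP _ (starProjection_apply_mem _ y)]
  exact norm_starProjection_apply_le _ y

theorem opNorm_le_one [CompleteSpace H] (hP : IsPartialIsom P) : ‖P‖ ≤ 1 :=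
  opNorm_le_bound _ zero_le_one fun y ↦ by simpa using hP.norm_apply_le y

theorem norm_apply_apply_of_ker_eq (hP : IsPartialIsom P) {A : H →L[ℂ] H} (hker : P.ker = A.rangeᗮ)
    (x : H) : ‖P (A x)‖ = ‖A x‖ :=
  hP _ (hker ▸ le_orthogonal_orthogonal _ ⟨x, rfl⟩)

theorem ker_comp_of_ker_eq (hP : IsPartialIsom P) {A : H →L[ℂ] H} (hker : P.ker = A.rangeᗮ) :
    (P ∘L A).ker = A.ker := by
  ext x
  simp only [LinearMap.mem_ker, coe_coe, comp_apply, ← norm_eq_zero (a := P (A x)),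
    hP.norm_apply_apply_of_ker_eq hker, norm_eq_zero]

end IsPartialIsom

namespace IsSpectralProjAbove

variable {H : Type*} [NormedAddCommGroup H] [InnerProductSpace ℂ H] [CompleteSpace H]
  {A Q : H →L[ℂ] H} {ε : ℝ}

theorem isStarProjection (hQ : IsSpectralProjAbove A ε Q) : IsStarProjection Q :=
  ⟨hQ.1, by rw [IsSelfAdjoint, star_eq_adjoint, hQ.2.1]⟩

theorem commute (hQ : IsSpectralProjAbove A ε Q) : Commute A Q := hQ.2.2.1

theorem apply_sub_apply_eq_zero (hQ : IsSpectralProjAbove A ε Q) (x : H) : Q (x - Q x) = 0 :=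
  hQ.isStarProjection.isIdempotentElem.apply_sub_apply_eq_zero x

theorem apply_apply_comm (hQ : IsSpectralProjAbove A ε Q) (x : H) : A (Q x) = Q (A x) :=
  congr($(hQ.commute.eq) x)

theorem mul_norm_le_norm_apply_apply_of_ker_eq (hQ : IsSpectralProjAbove A ε Q) (x : H) :
    ε * ‖Q x‖ ≤ ‖A (Q x)‖ := by
  have hlower : ε * ‖Q x‖ ^ 2 ≤ (⟪A (Q x), Q x⟫_ℂ).re := hQ.2.2.2.1 (Q x) ⟨x, rfl⟩
  have hupper : (⟪A (Q x), Q x⟫_ℂ).re ≤ ‖A (Q x)‖ * ‖Q x‖ :=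
    (Complex.re_le_norm _).trans (norm_inner_le_norm _ _)
  rcases (norm_nonneg (Q x)).eq_or_lt with h0 | hpos
  · rw [← h0, mul_zero]
    exact norm_nonneg _
  · exact le_of_mul_le_mul_right (by nlinarith) hpos

theorem apply_apply_eq_zero_iff (hQ : IsSpectralProjAbove A ε Q) (hε : 0 < ε) (x : H) :
    A (Q x) = 0 ↔ Q x = 0 := by
  refine ⟨fun h ↦ norm_le_zero_iff.1 (le_of_mul_le_mul_left ?_ hε), fun h ↦ by rw [h, map_zero]⟩
  simpa [h] using hQ.mul_norm_le_norm_apply_apply_of_ker_eq x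

theorem ker_le_ker (hQ : IsSpectralProjAbove A ε Q) (hε : 0 < ε) : A.ker ≤ Q.ker := fun x hx ↦ by
  rw [LinearMap.mem_ker, coe_coe] at hx ⊢
  rw [← hQ.apply_apply_eq_zero_iff hε, hQ.apply_apply_comm, hx, map_zero]

theorem re_inner_apply_le_of_mem_ker (hQ : IsSpectralProjAbove A ε Q) {y : H}
    (hy : y ∈ Q.ker) : (⟪A y, y⟫_ℂ).re ≤ ε * ‖y‖ ^ 2 := by
  rcases eq_or_ne y 0 with rfl | hy0
  · simp
  · exact (hQ.2.2.2.2 y hy hy0).le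

theorem inner_sub_comp_apply (hQ : IsSpectralProjAbove A ε Q) (x : H) :
    ⟪(A - A ∘L Q) x, x⟫_ℂ = ⟪A (x - Q x), x - Q x⟫_ℂ := by
  have hQx : ⟪A (x - Q x), Q x⟫_ℂ = 0 := by
    have hsymm : ⟪Q (A (x - Q x)), x⟫_ℂ = ⟪A (x - Q x), Q x⟫_ℂ :=
      hQ.isStarProjection.isSelfAdjoint.isSymmetric _ _
    rw [← hsymm, ← hQ.apply_apply_comm, hQ.apply_sub_apply_eq_zero, map_zero, inner_zero_left]
  rw [sub_apply, comp_apply, ← map_sub, inner_sub_right, hQx, sub_zero]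

theorem norm_sub_comp_le (hQ : IsSpectralProjAbove A ε Q) (hA : A.IsPositive) (hε : 0 ≤ ε) :
    ‖A - A ∘L Q‖ ≤ ε := by
  have hsa : IsSelfAdjoint (A - A ∘L Q) := hA.isSelfAdjoint.sub <|
    (hA.isSelfAdjoint.commute_iff hQ.isStarProjection.isSelfAdjoint).1 hQ.commute
  have hpos : 0 ≤ A - A ∘L Q := by
    rw [nonneg_iff_isPositive, isPositive_def']
    refine ⟨hsa, fun x ↦ ?_⟩
    rw [reApplyInnerSelf_apply, hQ.inner_sub_comp_apply]
    exact hA.re_inner_nonneg_left _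
  rw [CStarAlgebra.norm_le_iff_le_algebraMap _ hε hpos, le_def, isPositive_def']
  refine ⟨(IsSelfAdjoint.algebraMap _ (.all ε)).sub hsa, fun x ↦ ?_⟩
  have hsmul : RCLike.re ⟪ε • x, x⟫_ℂ = ε * ‖x‖ ^ 2 := by
    rw [← Complex.coe_smul, inner_smul_left]
    simp [← Complex.ofReal_pow]
  rw [reApplyInnerSelf_apply, sub_apply, inner_sub_left, map_sub, hQ.inner_sub_comp_apply,
    ContinuousLinearMap.algebraMap_apply, hsmul, RCLike.re_to_complex, sub_nonneg]
  calc (⟪A (x - Q x), x - Q x⟫_ℂ).re ≤ ε * ‖x - Q x‖ ^ 2 :=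
        hQ.re_inner_apply_le_of_mem_ker (hQ.apply_sub_apply_eq_zero x)
    _ ≤ ε * ‖x‖ ^ 2 := by gcongr; exact hQ.isStarProjection.norm_sub_apply_le x

end IsSpectralProjAbove

theorem polar_truncation_properties_general
    (H : Type*) [NormedAddCommGroup H] [InnerProductSpace ℂ H] [CompleteSpace H]
    (T P A Q : H →L[ℂ] H) (hT : ¬ IsSemiFredholm T)
    (ε : ℝ) (hε : 0 < ε)
    (hP : IsPartialIsom P) (hApos : ContinuousLinearMap.IsPositive A)
    (hkerP : LinearMap.ker (P : H →ₗ[ℂ] H) = (LinearMap.range (A : H →ₗ[ℂ] H))ᗮ)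
    (hTPA : T = P ∘L A)
    (hQ : IsSpectralProjAbove A ε Q) :
    (∀ x ∈ (LinearMap.ker ((P ∘L (A ∘L Q) : H →L[ℂ] H) : H →ₗ[ℂ] H))ᗮ, ε * ‖x‖ ≤ ‖(P ∘L (A ∘L Q)) x‖) ∧
      IsClosed (Set.range ⇑(P ∘L (A ∘L Q))) ∧
      ¬ FiniteDimensional ℂ (LinearMap.ker ((P ∘L (A ∘L Q) : H →L[ℂ] H) : H →ₗ[ℂ] H)) ∧
      ¬ FiniteDimensional ℂ ((LinearMap.range ((P ∘L (A ∘L Q) : H →L[ℂ] H) : H →ₗ[ℂ] H))ᗮ) ∧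
      ‖T - P ∘L (A ∘L Q)‖ ≤ ε := by
  set S := P ∘L (A ∘L Q)
  have hST : S = T ∘L Q := by rw [hTPA]; rfl
  have hnormS (x : H) : ‖S x‖ = ‖A (Q x)‖ := hP.norm_apply_apply_of_ker_eq hkerP (Q x)
  have hkerS : S.ker = Q.ker := by
    ext x
    rw [LinearMap.mem_ker, LinearMap.mem_ker, coe_coe, coe_coe, ← norm_eq_zero, hnormS,
      norm_eq_zero, hQ.apply_apply_eq_zero_iff hε]
  have hbound : ∀ x ∈ S.kerᗮ, ε * ‖x‖ ≤ ‖S x‖ := fun x hx ↦ by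
    rw [hkerS] at hx
    calc ε * ‖x‖ = ε * ‖Q x‖ := by
          rw [hQ.isStarProjection.apply_eq_self_of_mem_orthogonal_ker hx]
      _ ≤ ‖A (Q x)‖ := hQ.mul_norm_le_norm_apply_apply_of_ker_eq x
      _ = ‖S x‖ := (hnormS x).symm
  have hclosed : IsClosed (Set.range S) := S.isClosed_range_of_bound_on_orthogonal_ker hε hbound
  refine ⟨hbound, hclosed, fun hfin ↦ hT ?_, fun hfin ↦ hT ?_, ?_⟩
  · rw [hkerS] at hfin
    have hkerT : T.ker ≤ Q.ker := by
      rw [hTPA, hP.ker_comp_of_ker_eq hkerP]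
      exact hQ.ker_le_ker hε
    exact .of_isClosed_range_comp hQ.isStarProjection.isIdempotentElem (hST ▸ hclosed) hkerT
  · exact .of_range_le hclosed (hST ▸ LinearMap.range_comp_le_range _ _)
  · calc ‖T - S‖ = ‖P ∘L (A - A ∘L Q)‖ := by rw [hTPA, comp_sub]
      _ ≤ ‖P‖ * ‖A - A ∘L Q‖ := opNorm_comp_le _ _
      _ ≤ 1 * ε := by gcongr; exacts [hP.opNorm_le_one, hQ.norm_sub_comp_le hApos hε.le]
      _ = ε := one_mul ε

/-- Let `H` be a separable complex Hilbert space, `T ∈ B(H)` not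
semi-Fredholm, `0 < ε < ‖T‖`.  Let `T = P ∘ A` be the polar decomposition of `T` (`P` a
partial isometry, `A` positive, `ker P = (range A)ᗮ`) and let `ν` be the spectral measure
of `A`.  Then the operator `S = P ∘ ∫_{[ε,‖T‖]} t dν(t) = P ∘ (A ∘ Q)`, where
`Q = ν([ε,‖T‖])` is the spectral projection of `A` for `[ε, ‖T‖]`, satisfies:
(i) `‖S x‖ ≥ ε ‖x‖` for all `x ∈ (ker S)ᗮ`, so in particular `S` has closed range;
(ii) `dim (ker S) = dim ((range S)ᗮ) = ∞`; (iii) `‖T - S‖ ≤ ε`. -/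
theorem polar_truncation_properties
    (H : Type*) [NormedAddCommGroup H] [InnerProductSpace ℂ H] [CompleteSpace H]
    [TopologicalSpace.SeparableSpace H]
    (T P A Q : H →L[ℂ] H) (hT : ¬ IsSemiFredholm T)
    (ε : ℝ) (hε : 0 < ε) (hεT : ε < ‖T‖)
    (hP : IsPartialIsom P) (hApos : ContinuousLinearMap.IsPositive A)
    (hkerP : LinearMap.ker (P : H →ₗ[ℂ] H) = (LinearMap.range (A : H →ₗ[ℂ] H))ᗮ)
    (hTPA : T = P ∘L A)
    (hQ : IsSpectralProjAbove A ε Q) :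
    (∀ x ∈ (LinearMap.ker ((P ∘L (A ∘L Q) : H →L[ℂ] H) : H →ₗ[ℂ] H))ᗮ, ε * ‖x‖ ≤ ‖(P ∘L (A ∘L Q)) x‖) ∧
      IsClosed (Set.range ⇑(P ∘L (A ∘L Q))) ∧
      ¬ FiniteDimensional ℂ (LinearMap.ker ((P ∘L (A ∘L Q) : H →L[ℂ] H) : H →ₗ[ℂ] H)) ∧
      ¬ FiniteDimensional ℂ ((LinearMap.range ((P ∘L (A ∘L Q) : H →L[ℂ] H) : H →ₗ[ℂ] H))ᗮ) ∧
      ‖T - P ∘L (A ∘L Q)‖ ≤ ε :=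
  polar_truncation_properties_general H T P A Q hT ε hε hP hApos hkerP hTPA hQ

end
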